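/- Let p be a multiplicatively idempotent ultrafilter on ℕ (p ⊙ p = p) and q any ultrafilter on ℕ. Then E₂(p, q) = E₂(p, E₂(p, q)). -/
import Mathlib


/-- `E₁(p,q)`: `A ∈ E₁(p,q) ↔ {x | {y | x^y ∈ A} ∈ q} ∈ p`. -/
def E1 (p q : Ultrafilter ℕ) : Ultrafilter ℕ := p.bind fun n => q.map fun m => n ^ m

/-- `E₂(p,q)`: `A ∈ E₂(p,q) ↔ {x | {y | y^x ∈ A} ∈ q} ∈ p`. -/
def E2 (p q : Ultrafilter ℕ) : Ultrafilter ℕ := p.bind fun n => q.map fun m => m ^ n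

/-- Ultrafilter product: `A ∈ u ⊙ v ↔ {x | {y | x·y ∈ A} ∈ v} ∈ u`. -/
def umul (u v : Ultrafilter ℕ) : Ultrafilter ℕ := u.bind fun x => v.map fun y => x * y

lemma mem_ubind {α β} (u : Ultrafilter α) (f : α → Ultrafilter β) (A : Set β) :
    A ∈ u.bind f ↔ {x | A ∈ f x} ∈ u := Filter.mem_bind'

theorem stmt13 (p q : Ultrafilter ℕ) (hp : umul p p = p) :
    E2 p q = E2 p (E2 p q) := by
  ext A
  conv_lhs => rw [← hp]
  simp only [E2, umul, mem_ubind, Ultrafilter.mem_map, Set.preimage_setOf_eq,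
    Set.mem_setOf_eq, Set.preimage_preimage]
  have key : ∀ a b : ℕ, (fun m => (m ^ b) ^ a) = (fun m : ℕ => m ^ (a * b)) := by
    intro a b; funext m; rw [← pow_mul, mul_comm]
  constructor <;> intro h <;>
    · filter_upwards [h] with a ha
      filter_upwards [ha] with b hb
      simpa [key] using hb
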